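/- For every even k ≥ 2, the element xy, with x = (1, 3k/2+1)(k/2+1, k+1) and y = (1,2,…,k)(k+1,…,2k) in S_{2k}, acts on {1,…,2k} with exactly two orbits, each of size k. -/

import Mathlib

/-!
Write `k = 2m`. Then `xy` maps `a ↦ a + 1` on `{1, …, 4m}` except for `m ↦ 2m + 1`,
`2m ↦ 3m + 1`, `3m ↦ 1` and `4m ↦ m + 1`, so it is the product of the two `k`-cycles
`(1 … m, 2m+1 … 3m)` and `(m+1 … 2m, 3m+1 … 4m)`. Indexing the points of each cycle by
`ZMod k` makes `xy` act as `j ↦ j + 1`, so each orbit is the range of an injective map out of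
`ZMod k`.
-/

/-- `x = (1, 3k/2+1)(k/2+1, k+1)` as a permutation of `ℕ`. -/
def xPerm (k : ℕ) : Equiv.Perm ℕ :=
  Equiv.swap 1 (3 * k / 2 + 1) * Equiv.swap (k / 2 + 1) (k + 1)

/-- `y = (1,2,…,k)(k+1,k+2,…,2k)` as a permutation of `ℕ`. -/
def yPerm (k : ℕ) : Equiv.Perm ℕ :=
  (List.range' 1 k).formPerm * (List.range' (k + 1) k).formPerm

theorem MulAction.orbit_zpowers_eq_range {G α : Type*} [Group G] [MulAction G α] {n : ℕ}
    (g : G) (e : ZMod n → α) (he : ∀ j, g • e j = e (j + 1)) :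
    orbit (Subgroup.zpowers g) (e 0) = Set.range e := by
  have hpow : ∀ i : ℤ, g ^ i • e 0 = e i := by
    intro i
    induction i using Int.induction_on with
    | zero => simp
    | succ i ih =>
      rw [zpow_add_one, (Commute.zpow_self g _).eq, mul_smul, ih, he]; push_cast; rfl
    | pred i ih =>
      rw [zpow_sub_one, (Commute.zpow_self g _).inv_right.eq, mul_smul, ih, inv_smul_eq_iff, he]
      congr 1; push_cast; ring
  ext a
  simp only [mem_orbit_iff, Subtype.exists, Subgroup.mem_zpowers_iff, Subgroup.mk_smul,
    exists_prop, exists_exists_eq_and, hpow, Set.mem_range]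
  constructor
  · rintro ⟨i, rfl⟩
    exact ⟨_, rfl⟩
  · rintro ⟨j, rfl⟩
    obtain ⟨i, rfl⟩ := ZMod.intCast_surjective j
    exact ⟨i, rfl⟩

theorem List.formPerm_range'_apply {s n a : ℕ} (h₁ : s ≤ a) (h₂ : a < s + n) :
    (List.range' s n).formPerm a = if a + 1 = s + n then s else a + 1 := by
  obtain ⟨i, rfl⟩ : ∃ i, a = s + i := ⟨a - s, by omega⟩
  have h := List.formPerm_apply_getElem (List.range' s n) List.nodup_range' i
    (by simp only [List.length_range']; omega)
  simp only [List.getElem_range', List.length_range', one_mul] at h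
  rw [h]
  split_ifs with hi
  · simp [show i + 1 = n by omega]
  · rw [Nat.mod_eq_of_lt (by omega)]; ring

theorem List.formPerm_range'_apply_of_notMem {s n a : ℕ} (h : a < s ∨ s + n ≤ a) :
    (List.range' s n).formPerm a = a :=
  List.formPerm_apply_of_notMem (by simp only [List.mem_range']; omega)

theorem yPerm_apply {k a : ℕ} (h₁ : 1 ≤ a) (h₂ : a ≤ 2 * k) :
    yPerm k a = if a = k then 1 else if a = 2 * k then k + 1 else a + 1 := by
  rw [yPerm, Equiv.Perm.mul_apply]
  rcases le_or_gt a k with h | h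
  · rw [List.formPerm_range'_apply_of_notMem (s := k + 1) (by omega),
      List.formPerm_range'_apply h₁ (by omega)]
    split_ifs <;> omega
  · rw [List.formPerm_range'_apply (s := k + 1) (by omega) (by omega)]
    split_ifs <;> rw [List.formPerm_range'_apply_of_notMem (by omega)] <;> omega

theorem xPerm_apply (m a : ℕ) :
    xPerm (2 * m) a = if a = 1 then 3 * m + 1 else if a = 3 * m + 1 then 1
      else if a = m + 1 then 2 * m + 1 else if a = 2 * m + 1 then m + 1 else a := by
  simp only [xPerm, Equiv.Perm.mul_apply, Equiv.swap_apply_def]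
  split_ifs <;> omega

theorem xPerm_mul_yPerm_apply {m a : ℕ} (h₁ : 1 ≤ a) (h₂ : a ≤ 4 * m) :
    (xPerm (2 * m) * yPerm (2 * m)) a = if a = m then 2 * m + 1 else if a = 2 * m then 3 * m + 1
      else if a = 3 * m then 1 else if a = 4 * m then m + 1 else a + 1 := by
  rw [Equiv.Perm.mul_apply, yPerm_apply h₁ (by omega), xPerm_apply]
  split_ifs <;> omega

theorem ZMod.val_add_one_eq {n : ℕ} [NeZero n] (j : ZMod n) :
    (j + 1).val = if j.val + 1 = n then 0 else j.val + 1 := by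
  have hj := j.val_lt
  obtain rfl | hn := eq_or_ne n 1
  · rw [Subsingleton.elim (j + 1) 0, ZMod.val_zero, if_pos (by omega)]
  rw [ZMod.val_add, ZMod.val_one'' hn]
  split_ifs with h
  · rw [h, Nat.mod_self]
  · exact Nat.mod_eq_of_lt (by omega)

/-- For `c = 0` or `c = m`, the point that `xy` reaches from `c + 1` after `j` steps. -/
def xyOrbitPoint (m c : ℕ) (j : ZMod (2 * m)) : ℕ :=
  c + if j.val < m then j.val + 1 else j.val + m + 1

section
variable {m : ℕ} [NeZero m]

theorem xPerm_mul_yPerm_apply_xyOrbitPoint {c : ℕ} (hc : c = 0 ∨ c = m) (j : ZMod (2 * m)) :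
    (xPerm (2 * m) * yPerm (2 * m)) (xyOrbitPoint m c j) = xyOrbitPoint m c (j + 1) := by
  have hj := j.val_lt
  have hm := NeZero.pos m
  unfold xyOrbitPoint
  rw [xPerm_mul_yPerm_apply (by split_ifs <;> omega) (by split_ifs <;> omega),
    ZMod.val_add_one_eq]
  split_ifs <;> omega

theorem mem_range_xyOrbitPoint {c b : ℕ} :
    b ∈ Set.range (xyOrbitPoint m c) ↔
      c + 1 ≤ b ∧ b ≤ c + m ∨ c + 2 * m + 1 ≤ b ∧ b ≤ c + 3 * m := by
  constructor
  · rintro ⟨j, rfl⟩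
    have hj := j.val_lt
    unfold xyOrbitPoint
    split_ifs <;> omega
  · intro hb
    obtain ⟨j, hj⟩ :
        ∃ j : ZMod (2 * m), j.val = if b ≤ c + m then b - c - 1 else b - c - m - 1 :=
      ⟨_, ZMod.val_cast_of_lt (by split_ifs <;> omega)⟩
    refine ⟨j, ?_⟩
    unfold xyOrbitPoint
    rw [hj]
    split_ifs <;> omega

theorem xyOrbitPoint_injective (c : ℕ) : Function.Injective (xyOrbitPoint m c) := by
  intro i j h
  have hi := i.val_lt
  have hj := j.val_lt
  unfold xyOrbitPoint at h
  apply ZMod.val_injective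
  split_ifs at h <;> omega

theorem orbit_xPerm_mul_yPerm {c : ℕ} (hc : c = 0 ∨ c = m) :
    MulAction.orbit (Subgroup.zpowers (xPerm (2 * m) * yPerm (2 * m))) (xyOrbitPoint m c 0) =
      Set.range (xyOrbitPoint m c) :=
  MulAction.orbit_zpowers_eq_range _ _ (xPerm_mul_yPerm_apply_xyOrbitPoint hc)

end

/-- For even `k ≥ 2`, the cyclic group `⟨xy⟩` has exactly two orbits on
`{1,…,2k}`, each of size `k`. -/
theorem stmt_17 (k : ℕ) (hk : 2 ≤ k) (hk2 : Even k) :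
    ∃ a b : ℕ,
      Disjoint (MulAction.orbit (Subgroup.zpowers (xPerm k * yPerm k)) a)
        (MulAction.orbit (Subgroup.zpowers (xPerm k * yPerm k)) b) ∧
      MulAction.orbit (Subgroup.zpowers (xPerm k * yPerm k)) a ∪
        MulAction.orbit (Subgroup.zpowers (xPerm k * yPerm k)) b = Set.Icc 1 (2 * k) ∧
      Nat.card (MulAction.orbit (Subgroup.zpowers (xPerm k * yPerm k)) a) = k ∧
      Nat.card (MulAction.orbit (Subgroup.zpowers (xPerm k * yPerm k)) b) = k := by
  obtain ⟨m, rfl⟩ := hk2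
  rw [← two_mul]
  have : NeZero m := ⟨by omega⟩
  refine ⟨xyOrbitPoint m 0 0, xyOrbitPoint m m 0, ?_⟩
  rw [orbit_xPerm_mul_yPerm (Or.inl rfl), orbit_xPerm_mul_yPerm (Or.inr rfl),
    Nat.card_range_of_injective (xyOrbitPoint_injective _),
    Nat.card_range_of_injective (xyOrbitPoint_injective _), Nat.card_zmod]
  refine ⟨Set.disjoint_left.2 fun b h₁ h₂ => ?_, Set.ext fun b => ?_, rfl, rfl⟩
  · rw [mem_range_xyOrbitPoint] at h₁ h₂
    omega
  · rw [Set.mem_union, mem_range_xyOrbitPoint, mem_range_xyOrbitPoint, Set.mem_Icc]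
    omega
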